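/- arXiv:2012.00292 — 5 statements merged into one kernel-verified Lean document; each statement's English description precedes it below -/
import Mathlib

section
/- Let x be a feasible half-integral solution to the Held–Karp LP on a finite vertex set V (i.e., x assigns values in {0, 1/2, 1} to edges, every vertex has x-degree exactly 2, and every nonempty proper subset S of V satisfies x(δ(S)) ≥ 2). If H and T₁,…,T_t (t odd) form a comb (the T_i pairwise disjoint, each T_i meets both H and its complement) whose comb inequality x(δ(H)) + Σᵢ x(δ(Tᵢ)) ≥ 3t+1 is violated by x, then x(δ(Tᵢ)) ≥ 2 for all i implies Σᵢ x(e(Aᵢ,Bᵢ)) > t − 1 + x(δ*(H)) and Σᵢ x(e(Aᵢ,Bᵢ)) < t + 1 − x(δ*(H)), where Aᵢ = Tᵢ ∩ H, Bᵢ = Tᵢ \ H, and δ*(H) is the set of edges leaving H not contained in any tooth. In particular x(δ*(H)) < 1. -/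
/-!
Split each tooth `T` into `A = T ∩ H` and `B = T \ H`. Counting edges gives
`x(δ(A)) + x(δ(B)) = x(δ(T)) + 2 x(e(A,B))`, so the subtour constraints on `A` and `B` yield
`x(δ(T)) + 2 x(e(A,B)) ≥ 4`. Summed over the teeth and set against the violated comb inequality
this is the lower bound; the upper bound only needs `x(δ(T)) ≥ 2`, which forces `x(δ(H)) < t + 1`.
-/

open Finset

variable {V : Type*} [Fintype V] [DecidableEq V]

/-- Total x-weight of edges leaving `S` (each crossing edge counted once, from inside to outside). -/
def cutVal (x : V → V → ℝ) (S : Finset V) : ℝ := ∑ i ∈ S, ∑ j ∈ Sᶜ, x i j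

/-- Total x-weight of edges between disjoint sets `A` and `B`. -/
def eVal (x : V → V → ℝ) (A B : Finset V) : ℝ := ∑ i ∈ A, ∑ j ∈ B, x i j

/-- The support graph of an edge weighting. -/
def support (x : V → V → ℝ) : SimpleGraph V where
  Adj i j := i ≠ j ∧ (0 < x i j ∨ 0 < x j i)
  symm := ⟨fun i j h => ⟨h.1.symm, h.2.symm⟩⟩
  loopless := ⟨fun i h => h.1 rfl⟩

/-- The weight-1/2 edges of `x` decompose into the edge-disjoint triangles `𝒯`. -/
def TriDecomp (x : V → V → ℝ) (𝒯 : Finset (Finset V)) : Prop :=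
  (∀ tr ∈ 𝒯, tr.card = 3) ∧
  (∀ tr ∈ 𝒯, ∀ i ∈ tr, ∀ j ∈ tr, i ≠ j → x i j = 1 / 2) ∧
  (∀ i j : V, i ≠ j → x i j = 1 / 2 → ∃! tr, tr ∈ 𝒯 ∧ i ∈ tr ∧ j ∈ tr)

lemma cutVal_add_cutVal_of_disjoint {x : V → V → ℝ} (hsym : ∀ i j, x i j = x j i)
    {A B : Finset V} (h : Disjoint A B) :
    cutVal x A + cutVal x B = cutVal x (A ∪ B) + 2 * eVal x A B := by
  have hAc : Aᶜ = (A ∪ B)ᶜ ∪ B := by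
    ext v
    have := fun hv : v ∈ A => disjoint_left.mp h hv
    simp only [mem_compl, mem_union]
    tauto
  have hBc : Bᶜ = (A ∪ B)ᶜ ∪ A := by
    ext v
    have := fun hv : v ∈ A => disjoint_left.mp h hv
    simp only [mem_compl, mem_union]
    tauto
  have hdA : Disjoint (A ∪ B)ᶜ B := disjoint_compl_left.mono_right subset_union_right
  have hdB : Disjoint (A ∪ B)ᶜ A := disjoint_compl_left.mono_right subset_union_left
  have hBA : eVal x B A = eVal x A B := by
    unfold eVal
    rw [sum_comm]
    exact sum_congr rfl fun i _ => sum_congr rfl fun j _ => hsym j i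
  unfold cutVal eVal at *
  rw [hAc, hBc, sum_union h]
  simp only [sum_union hdA, sum_union hdB, sum_add_distrib]
  linarith

lemma four_le_cutVal_add_two_mul_eVal {x : V → V → ℝ} (hsym : ∀ i j, x i j = x j i)
    (hsub : ∀ S : Finset V, S.Nonempty → S ≠ univ → 2 ≤ cutVal x S)
    {T H : Finset V} (hA : (T ∩ H).Nonempty) (hB : (T \ H).Nonempty) :
    4 ≤ cutVal x T + 2 * eVal x (T ∩ H) (T \ H) := by
  obtain ⟨a, ha⟩ := hA
  obtain ⟨b, hb⟩ := hB
  have hA_ne : T ∩ H ≠ univ := fun h => (mem_sdiff.mp hb).2 (mem_inter.mp (h ▸ mem_univ b)).2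
  have hB_ne : T \ H ≠ univ := fun h => (mem_sdiff.mp (h ▸ mem_univ a)).2 (mem_inter.mp ha).2
  have hsplit := cutVal_add_cutVal_of_disjoint hsym (disjoint_sdiff_inter T H).symm
  rw [show T ∩ H ∪ T \ H = T from sup_inf_sdiff T H] at hsplit
  linarith [hsub _ ⟨a, ha⟩ hA_ne, hsub _ ⟨b, hb⟩ hB_ne]

theorem comb_violation_bounds_general
    (x : V → V → ℝ)
    (hsym : ∀ i j, x i j = x j i)
    (hsub : ∀ S : Finset V, S.Nonempty → S ≠ Finset.univ → 2 ≤ cutVal x S)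
    (H : Finset V) (t : ℕ) (T : Fin t → Finset V)
    (hteeth : ∀ i, ((T i) ∩ H).Nonempty ∧ ((T i) \ H).Nonempty)
    (hviol : cutVal x H + ∑ i, cutVal x (T i) < 3 * (t : ℝ) + 1)
    (hT2 : ∀ i, 2 ≤ cutVal x (T i)) :
    ((t : ℝ) - 1 + (cutVal x H - ∑ i, eVal x ((T i) ∩ H) ((T i) \ H)) <
        ∑ i, eVal x ((T i) ∩ H) ((T i) \ H)) ∧
    (∑ i, eVal x ((T i) ∩ H) ((T i) \ H) <
        (t : ℝ) + 1 - (cutVal x H - ∑ i, eVal x ((T i) ∩ H) ((T i) \ H))) ∧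
    (cutVal x H - ∑ i, eVal x ((T i) ∩ H) ((T i) \ H)) < 1 := by
  have hteeth_sum : 4 * (t : ℝ) ≤
      ∑ i, cutVal x (T i) + 2 * ∑ i, eVal x ((T i) ∩ H) ((T i) \ H) := by
    have := card_nsmul_le_sum univ _ 4 fun i _ =>
      four_le_cutVal_add_two_mul_eVal hsym hsub (hteeth i).1 (hteeth i).2
    simpa [sum_add_distrib, mul_sum, mul_comm] using this
  have hcut_sum : 2 * (t : ℝ) ≤ ∑ i, cutVal x (T i) := by
    simpa [mul_comm] using card_nsmul_le_sum univ _ 2 fun i _ => hT2 i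
  exact ⟨by linarith, by linarith, by linarith⟩

/-- Structural bounds for a violated comb inequality (half-integral Held–Karp solution). -/
theorem comb_violation_bounds
    (x : V → V → ℝ)
    (hsym : ∀ i j, x i j = x j i)
    (hdiag : ∀ i, x i i = 0)
    (hval : ∀ i j, x i j = 0 ∨ x i j = 1 / 2 ∨ x i j = 1)
    (hdeg : ∀ i : V, ∑ j, x i j = 2)
    (hsub : ∀ S : Finset V, S.Nonempty → S ≠ Finset.univ → 2 ≤ cutVal x S)
    (H : Finset V) (t : ℕ) (ht : Odd t) (T : Fin t → Finset V)
    (hdisj : ∀ i j, i ≠ j → Disjoint (T i) (T j))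
    (hteeth : ∀ i, ((T i) ∩ H).Nonempty ∧ ((T i) \ H).Nonempty)
    (hviol : cutVal x H + ∑ i, cutVal x (T i) < 3 * (t : ℝ) + 1)
    (hT2 : ∀ i, 2 ≤ cutVal x (T i)) :
    ((t : ℝ) - 1 + (cutVal x H - ∑ i, eVal x ((T i) ∩ H) ((T i) \ H)) <
        ∑ i, eVal x ((T i) ∩ H) ((T i) \ H)) ∧
    (∑ i, eVal x ((T i) ∩ H) ((T i) \ H) <
        (t : ℝ) + 1 - (cutVal x H - ∑ i, eVal x ((T i) ∩ H) ((T i) \ H))) ∧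
    (cutVal x H - ∑ i, eVal x ((T i) ∩ H) ((T i) \ H)) < 1 :=
  comb_violation_bounds_general x hsym hsub H t T hteeth hviol hT2
end

section
/- Let x be a feasible half-integral Held–Karp solution whose weight-1/2 edges form a graph that decomposes into edge-disjoint triangles. Then for every subset S of vertices, x(δ(S)) is an integer. -/
/-! Every crossing edge of weight `1/2` lies in exactly one triangle of `𝒯`, and a triangle `t`
contains `|t ∩ S| · |t \ S|` crossing pairs, an even number because the two factors add up to
`3`. So the half-edges contribute an integer to `x(δ(S))`, and every other crossing edge has
weight `0` or `1`. -/

open Finset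

variable {V : Type*} [Fintype V] [DecidableEq V]

theorem Finset.card_inter_add_card_compl_inter {α : Type*} [Fintype α] [DecidableEq α]
    (S t : Finset α) : #(S ∩ t) + #(Sᶜ ∩ t) = #t := by
  rw [inter_comm Sᶜ, ← sdiff_eq_inter_compl, inter_comm, card_inter_add_card_sdiff]

theorem Finset.even_card_inter_mul_card_compl_inter {α : Type*} [Fintype α] [DecidableEq α]
    {t : Finset α} (ht : Odd #t) (S : Finset α) : Even (#(S ∩ t) * #(Sᶜ ∩ t)) := by
  rw [← card_inter_add_card_compl_inter S t] at ht
  rw [Nat.even_mul, ← Nat.not_odd_iff_even, ← Nat.not_odd_iff_even, ← not_and_or]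
  exact fun h => Nat.not_even_iff_odd.mpr ht (h.1.add_odd h.2)

theorem Finset.sum_sum_card_filter_mem_and_mem {α : Type*} [DecidableEq α]
    (𝒯 : Finset (Finset α)) (A B : Finset α) :
    ∑ i ∈ A, ∑ j ∈ B, #{t ∈ 𝒯 | i ∈ t ∧ j ∈ t} = ∑ t ∈ 𝒯, #(A ∩ t) * #(B ∩ t) := by
  calc _ = ∑ i ∈ A, ∑ t ∈ 𝒯, ∑ j ∈ B, if i ∈ t ∧ j ∈ t then 1 else 0 := by
        simp only [card_filter]; exact sum_congr rfl fun i _ => sum_comm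
    _ = ∑ t ∈ 𝒯, ∑ i ∈ A, ∑ j ∈ B, if i ∈ t ∧ j ∈ t then 1 else 0 := sum_comm
    _ = _ := by
        simp only [← filter_mem_eq_inter, card_filter, sum_mul_sum, ite_zero_mul_ite_zero, mul_one]

namespace TriDecomp

variable {α : Type*} [DecidableEq α] {x : α → α → ℝ} {𝒯 : Finset (Finset α)}

theorem card_filter_mem_and_mem (h : TriDecomp x 𝒯) {i j : α} (hij : i ≠ j) :
    #{t ∈ 𝒯 | i ∈ t ∧ j ∈ t} = if x i j = 1 / 2 then 1 else 0 := by
  split_ifs with hx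
  · exact card_eq_one_iff_existsUnique.mpr (by simpa using h.2.2 i j hij hx)
  · exact card_eq_zero.mpr <| filter_eq_empty_iff.mpr fun t ht hmem =>
      hx (h.2.1 t ht i hmem.1 j hmem.2 hij)

theorem eq_card_filter_div_two_add (h : TriDecomp x 𝒯)
    (hval : ∀ i j, x i j = 0 ∨ x i j = 1 / 2 ∨ x i j = 1) {i j : α} (hij : i ≠ j) :
    x i j = (#{t ∈ 𝒯 | i ∈ t ∧ j ∈ t} : ℝ) / 2 + if x i j = 1 then 1 else 0 := by
  rw [h.card_filter_mem_and_mem hij]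
  rcases hval i j with hx | hx | hx <;> norm_num [hx]

end TriDecomp

theorem cut_integrality_general
    (x : V → V → ℝ)
    (hval : ∀ i j, x i j = 0 ∨ x i j = 1 / 2 ∨ x i j = 1)
    (𝒯 : Finset (Finset V)) (htri : TriDecomp x 𝒯)
    (S : Finset V) :
    ∃ k : ℤ, cutVal x S = (k : ℝ) := by
  have hsplit : cutVal x S = (∑ t ∈ 𝒯, #(S ∩ t) * #(Sᶜ ∩ t) : ℕ) / 2 +
      (∑ i ∈ S, #{j ∈ Sᶜ | x i j = 1} : ℕ) := by
    rw [← sum_sum_card_filter_mem_and_mem]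
    simp only [cutVal, Nat.cast_sum, sum_div, ← sum_add_distrib]
    refine sum_congr rfl fun i hi => ?_
    rw [natCast_card_filter, ← sum_add_distrib]
    exact sum_congr rfl fun j hj =>
      htri.eq_card_filter_div_two_add hval (ne_of_mem_of_not_mem hi (mem_compl.mp hj))
  obtain ⟨m, hm⟩ : Even (∑ t ∈ 𝒯, #(S ∩ t) * #(Sᶜ ∩ t)) := even_sum _ fun t ht =>
    even_card_inter_mul_card_compl_inter (by rw [htri.1 t ht]; decide) S
  exact ⟨m + ∑ i ∈ S, #{j ∈ Sᶜ | x i j = 1}, by rw [hsplit, hm]; push_cast; ring⟩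

/-- If the half-edges of a half-integral Held–Karp solution decompose into edge-disjoint
triangles, then every cut value is an integer. -/
theorem cut_integrality
    (x : V → V → ℝ)
    (hsym : ∀ i j, x i j = x j i)
    (hdiag : ∀ i, x i i = 0)
    (hval : ∀ i j, x i j = 0 ∨ x i j = 1 / 2 ∨ x i j = 1)
    (hdeg : ∀ i : V, ∑ j, x i j = 2)
    (hsub : ∀ S : Finset V, S.Nonempty → S ≠ Finset.univ → 2 ≤ cutVal x S)
    (𝒯 : Finset (Finset V)) (htri : TriDecomp x 𝒯)
    (S : Finset V) :
    ∃ k : ℤ, cutVal x S = (k : ℝ) :=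
  cut_integrality_general x hval 𝒯 htri S
end

section
/- Let x be a feasible half-integral Held–Karp solution. If a comb with teeth T₁,…,T_t is violated by x, then for every tooth Tᵢ, the support graph of x restricted to Tᵢ is connected (i.e., the graph on Tᵢ whose edges are those e ⊆ Tᵢ with x(e) > 0 is connected). -/
/-! A tooth `T` whose support graph falls apart into two pieces `A`, `T \ A` with no `x`-weight
between them has `x(δ(T)) = x(δ(A)) + x(δ(T \ A)) ≥ 4` by subtour elimination. Every other tooth
`T` satisfies `x(E(T ∩ H, T \ H)) + x(δ(T)) ≥ 3`, and the handle pays for the edges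
`E(T ∩ H, T \ H)` of all teeth at once, so the comb value is at least `3t + 1`. -/

open Finset

variable {V : Type*} [Fintype V] [DecidableEq V]

lemma SimpleGraph.exists_subset_forall_not_adj_of_not_preconnected_induce {W : Type*}
    [DecidableEq W] {G : SimpleGraph W} {T : Finset W}
    (h : ¬(G.induce (T : Set W)).Preconnected) :
    ∃ A ⊆ T, A.Nonempty ∧ (T \ A).Nonempty ∧ ∀ a ∈ A, ∀ b ∈ T \ A, ¬G.Adj a b := by
  classical
  obtain ⟨u, v, huv⟩ : ∃ u v, ¬(G.induce (T : Set W)).Reachable u v := by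
    simpa [SimpleGraph.Preconnected] using h
  let A := T.filter fun w => ∃ hw : w ∈ T, (G.induce (T : Set W)).Reachable u ⟨w, hw⟩
  refine ⟨A, filter_subset _ _, ⟨u, mem_filter.2 ⟨u.2, u.2, .rfl⟩⟩,
    ⟨v, mem_sdiff.2 ⟨v.2, fun hv => huv (mem_filter.1 hv).2.2⟩⟩, ?_⟩
  intro a ha b hb hab
  obtain ⟨-, haT, hua⟩ := mem_filter.1 ha
  obtain ⟨hbT, hbA⟩ := mem_sdiff.1 hb
  have hadj : (G.induce (T : Set W)).Adj ⟨a, haT⟩ ⟨b, hbT⟩ := hab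
  exact hbA (mem_filter.2 ⟨hbT, hbT, hua.trans hadj.reachable⟩)

lemma card_mul_add_le_sum {ι : Type*} [Fintype ι] {f : ι → ℝ} {a b : ℝ} (h : ∀ i, a ≤ f i)
    (i₀ : ι) (h₀ : a + b ≤ f i₀) : a * Fintype.card ι + b ≤ ∑ i, f i := by
  have hsum : f i₀ - a ≤ ∑ i, (f i - a) :=
    single_le_sum (fun i _ => sub_nonneg.2 (h i)) (mem_univ i₀)
  rw [sum_sub_distrib, sum_const, card_univ, nsmul_eq_mul] at hsum
  linarith

lemma Finset.ne_univ_of_disjoint {α : Type*} [Fintype α] {A B : Finset α} (hAB : Disjoint A B)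
    (hB : B.Nonempty) : A ≠ univ := by
  rintro rfl
  obtain ⟨b, hb⟩ := hB
  exact disjoint_left.1 hAB (mem_univ b) hb

open scoped Function

section EdgeWeights

variable {α : Type*} {x : α → α → ℝ}

lemma eVal_comm (hsym : ∀ i j, x i j = x j i) (A B : Finset α) : eVal x A B = eVal x B A := by
  rw [eVal, eVal, sum_comm]
  simp only [hsym]

lemma eVal_nonneg (hx : ∀ i j, 0 ≤ x i j) (A B : Finset α) : 0 ≤ eVal x A B :=
  sum_nonneg fun i _ => sum_nonneg fun j _ => hx i j

lemma eVal_mono (hx : ∀ i j, 0 ≤ x i j) {A A' B B' : Finset α} (hA : A ⊆ A') (hB : B ⊆ B') :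
    eVal x A B ≤ eVal x A' B' :=
  (sum_le_sum fun i _ => sum_le_sum_of_subset_of_nonneg hB fun j _ _ => hx i j).trans <|
    sum_le_sum_of_subset_of_nonneg hA fun i _ _ => sum_nonneg fun j _ => hx i j

lemma eVal_eq_zero_of_forall_not_adj (hx : ∀ i j, 0 ≤ x i j) {A B : Finset α}
    (hAB : Disjoint A B) (h : ∀ a ∈ A, ∀ b ∈ B, ¬(support x).Adj a b) : eVal x A B = 0 := by
  refine sum_eq_zero fun a ha => sum_eq_zero fun b hb => le_antisymm ?_ (hx a b)
  refine not_lt.1 fun hpos => h a ha b hb ⟨?_, Or.inl hpos⟩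
  rintro rfl
  exact disjoint_left.1 hAB ha hb

end EdgeWeights

section Cuts

variable {x : V → V → ℝ}

lemma cutVal_eq_sum_sub_eVal (x : V → V → ℝ) (S : Finset V) :
    cutVal x S = ∑ i ∈ S, ∑ j, x i j - eVal x S S := by
  rw [cutVal, eVal, ← sum_sub_distrib]
  refine sum_congr rfl fun i _ => ?_
  rw [← sum_compl_add_sum S]
  ring

lemma cutVal_union_of_disjoint (x : V → V → ℝ) {A B : Finset V} (hAB : Disjoint A B) :
    cutVal x (A ∪ B) = cutVal x A + cutVal x B - eVal x A B - eVal x B A := by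
  simp only [cutVal_eq_sum_sub_eVal, eVal, sum_union hAB, sum_add_distrib]
  ring

lemma sum_eVal_le_cutVal {ι : Type*} [Fintype ι] (hx : ∀ i j, 0 ≤ x i j) {S : Finset V}
    {A B : ι → Finset V} (hA : Pairwise (Disjoint on A)) (hAS : ∀ i, A i ⊆ S)
    (hBS : ∀ i, B i ⊆ Sᶜ) : ∑ i, eVal x (A i) (B i) ≤ cutVal x S :=
  calc ∑ i, eVal x (A i) (B i)
      ≤ ∑ i, eVal x (A i) Sᶜ := sum_le_sum fun i _ => eVal_mono hx subset_rfl (hBS i)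
    _ = eVal x (univ.biUnion A) Sᶜ := (sum_biUnion (hA.set_pairwise _)).symm
    _ ≤ eVal x S Sᶜ := eVal_mono hx (biUnion_subset.2 fun i _ => hAS i) subset_rfl

lemma four_le_cutVal_of_not_preconnected
    (hsub : ∀ S : Finset V, S.Nonempty → S ≠ univ → 2 ≤ cutVal x S) (hx : ∀ i j, 0 ≤ x i j)
    {T : Finset V} (h : ¬((support x).induce (T : Set V)).Preconnected) : 4 ≤ cutVal x T := by
  obtain ⟨A, hAT, hA, hB, hnadj⟩ :=
    SimpleGraph.exists_subset_forall_not_adj_of_not_preconnected_induce h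
  have hdisj : Disjoint A (T \ A) := disjoint_sdiff
  have hcut := cutVal_union_of_disjoint x hdisj
  rw [union_sdiff_of_subset hAT, eVal_eq_zero_of_forall_not_adj hx hdisj hnadj,
    eVal_eq_zero_of_forall_not_adj hx hdisj.symm fun b hb a ha hba => hnadj a ha b hb hba.symm]
    at hcut
  linarith [hsub A hA (ne_univ_of_disjoint hdisj hB),
    hsub (T \ A) hB (ne_univ_of_disjoint hdisj.symm hA)]

lemma three_le_eVal_add_cutVal
    (hsub : ∀ S : Finset V, S.Nonempty → S ≠ univ → 2 ≤ cutVal x S)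
    (hsym : ∀ i j, x i j = x j i) {T H : Finset V}
    (hTH : (T ∩ H).Nonempty) (hTH' : (T \ H).Nonempty) (hT : T ≠ univ) :
    3 ≤ eVal x (T ∩ H) (T \ H) + cutVal x T := by
  have hdisj : Disjoint (T ∩ H) (T \ H) := (disjoint_sdiff_inter T H).symm
  have hcut := cutVal_union_of_disjoint x hdisj
  rw [show T ∩ H ∪ T \ H = T from sup_inf_sdiff T H, eVal_comm hsym (T \ H)] at hcut
  -- average `cutVal x T ≥ 2` with `cutVal x T ≥ 4 - 2 * eVal x (T ∩ H) (T \ H)`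
  linarith [hsub _ hTH (ne_univ_of_disjoint hdisj hTH'),
    hsub _ hTH' (ne_univ_of_disjoint hdisj.symm hTH), hsub T (hTH.mono inter_subset_left) hT]

lemma three_mul_card_add_one_le_of_four_le_cutVal {ι : Type*} [Fintype ι]
    (hsub : ∀ S : Finset V, S.Nonempty → S ≠ univ → 2 ≤ cutVal x S)
    (hx : ∀ i j, 0 ≤ x i j) (hsym : ∀ i j, x i j = x j i) (H : Finset V) (T : ι → Finset V)
    (hdisj : Pairwise (Disjoint on T)) (hteeth : ∀ i, (T i ∩ H).Nonempty ∧ (T i \ H).Nonempty)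
    (i₀ : ι) (h₀ : 4 ≤ cutVal x (T i₀)) :
    3 * Fintype.card ι + 1 ≤ cutVal x H + ∑ i, cutVal x (T i) := by
  have hhandle : ∑ i, eVal x (T i ∩ H) (T i \ H) ≤ cutVal x H :=
    sum_eVal_le_cutVal hx (hdisj.mono fun _ _ h => h.mono inter_subset_left inter_subset_left)
      (fun _ => inter_subset_right) fun _ _ hv => mem_compl.2 (mem_sdiff.1 hv).2
  have htooth : ∀ i, 3 ≤ eVal x (T i ∩ H) (T i \ H) + cutVal x (T i) := by
    intro i
    rcases eq_or_ne i i₀ with rfl | hi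
    · linarith [eVal_nonneg hx (T i ∩ H) (T i \ H)]
    · exact three_le_eVal_add_cutVal hsub hsym (hteeth i).1 (hteeth i).2
        (ne_univ_of_disjoint (hdisj hi) ((hteeth i₀).1.mono inter_subset_left))
  have := card_mul_add_le_sum (b := 1) htooth i₀ (by linarith [eVal_nonneg hx (T i₀ ∩ H) (T i₀ \ H)])
  rw [sum_add_distrib] at this
  linarith

end Cuts

theorem violated_comb_teeth_connected_general
    (x : V → V → ℝ)
    (hsym : ∀ i j, x i j = x j i)
    (hrange : ∀ i j, 0 ≤ x i j ∧ x i j ≤ 1)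
    (hsub : ∀ S : Finset V, S.Nonempty → S ≠ Finset.univ → 2 ≤ cutVal x S)
    (H : Finset V) (t : ℕ) (T : Fin t → Finset V)
    (hdisj : ∀ i j, i ≠ j → Disjoint (T i) (T j))
    (hteeth : ∀ i, ((T i) ∩ H).Nonempty ∧ ((T i) \ H).Nonempty)
    (hviol : cutVal x H + ∑ i, cutVal x (T i) < 3 * (t : ℝ) + 1) :
    ∀ i, ((support x).induce ((T i : Finset V) : Set V)).Connected := by
  intro i
  have hx : ∀ i j, 0 ≤ x i j := fun i j => (hrange i j).1
  rw [SimpleGraph.connected_iff]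
  refine ⟨?_, ((hteeth i).1.mono inter_subset_left).to_subtype⟩
  by_contra hpre
  have hcomb := three_mul_card_add_one_le_of_four_le_cutVal hsub hx hsym H T
    (fun i j => hdisj i j) hteeth i (four_le_cutVal_of_not_preconnected hsub hx hpre)
  rw [Fintype.card_fin] at hcomb
  linarith

/-- In a comb violated by a feasible Held–Karp solution, the support graph restricted to any
tooth is connected. -/
theorem violated_comb_teeth_connected
    (x : V → V → ℝ)
    (hsym : ∀ i j, x i j = x j i)
    (hdiag : ∀ i, x i i = 0)
    (hrange : ∀ i j, 0 ≤ x i j ∧ x i j ≤ 1)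
    (hdeg : ∀ i : V, ∑ j, x i j = 2)
    (hsub : ∀ S : Finset V, S.Nonempty → S ≠ Finset.univ → 2 ≤ cutVal x S)
    (H : Finset V) (t : ℕ) (ht : Odd t) (T : Fin t → Finset V)
    (hdisj : ∀ i j, i ≠ j → Disjoint (T i) (T j))
    (hteeth : ∀ i, ((T i) ∩ H).Nonempty ∧ ((T i) \ H).Nonempty)
    (hviol : cutVal x H + ∑ i, cutVal x (T i) < 3 * (t : ℝ) + 1) :
    ∀ i, ((support x).induce ((T i : Finset V) : Set V)).Connected :=
  violated_comb_teeth_connected_general x hsym hrange hsub H t T hdisj hteeth hviol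
end

section
/- Let x be a feasible half-integral Held–Karp solution whose weight-1/2 edges decompose into edge-disjoint triangles, and let C be a comb violated by x with handle H and teeth T₁,…,T_t. If there is exactly one edge of weight 1/2 between A₁ = T₁ ∩ H and B₁ = T₁ \ H and no other x-weight between A₁ and B₁ (so x(e(A₁,B₁)) = 1/2), then the third vertex of the triangle containing that half-edge lies outside T₁, and consequently x(δ*(H)) ≥ 1/2. -/
open Finset

variable {V : Type*} [Fintype V] [DecidableEq V]

/-! The half-edge `ab` lies in a triangle `abc`. If `c` were in the tooth `T`, then `cb` (when
`c ∈ H`) or `ac` (when `c ∉ H`) would be a second half-edge from `T ∩ H` to `T \ H`. So `c ∉ T`,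
and whichever of `cb`, `ac` crosses `H` has exactly one end in `T`; as the teeth are disjoint, it
lies in no tooth and contributes its weight `1/2` to `x(δ*(H))`. -/

open Function

lemma Finset.exists_mem_ne_ne_of_card_eq_three {α : Type*} [DecidableEq α] {s : Finset α}
    (hs : s.card = 3) (a b : α) : ∃ c ∈ s, c ≠ a ∧ c ≠ b := by
  obtain ⟨c, hc, hcb⟩ := (s.erase a).exists_mem_ne
    (by have := s.pred_card_le_card_erase (a := a); omega) b
  exact ⟨c, Finset.mem_of_mem_erase hc, Finset.ne_of_mem_erase hc, hcb⟩

lemma notMem_of_mem_of_notMem_of_pairwise_disjoint {α ι : Type*} {T : ι → Finset α}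
    (hT : Pairwise (Disjoint on T)) {i₀ : ι} {u v : α} (hu : u ∈ T i₀) (hv : v ∉ T i₀)
    (i : ι) (hui : u ∈ T i) : v ∉ T i := by
  obtain rfl : i = i₀ := by
    by_contra h
    exact Finset.disjoint_left.mp (hT h) hui hu
  exact hv

lemma notMem_of_adj_ends_of_unique_crossing {α : Type*} [DecidableEq α] {x : α → α → ℝ}
    {T H : Finset α} {a b c : α}
    (ha : a ∈ T ∩ H) (hb : b ∈ T \ H)
    (honly : ∀ a' ∈ T ∩ H, ∀ b' ∈ T \ H, ¬(a' = a ∧ b' = b) → x a' b' = 0)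
    (hxac : x a c ≠ 0) (hxcb : x c b ≠ 0) (hca : c ≠ a) (hcb : c ≠ b) : c ∉ T := by
  intro hcT
  by_cases hcH : c ∈ H
  · exact hxcb (honly c (Finset.mem_inter.mpr ⟨hcT, hcH⟩) b hb fun h => hca h.1)
  · exact hxac (honly a ha c (Finset.mem_sdiff.mpr ⟨hcT, hcH⟩) fun h => hcb h.2)

lemma sum_eVal_add_le_cutVal {ι : Type*} [Fintype ι] {x : V → V → ℝ}
    (hx : ∀ i j, 0 ≤ x i j) {H : Finset V} {T : ι → Finset V} (hT : Pairwise (Disjoint on T))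
    {u v : V} (hu : u ∈ H) (hv : v ∉ H) (huv : ∀ i, u ∈ T i → v ∉ T i) :
    ∑ i, eVal x (T i ∩ H) (T i \ H) + x u v ≤ cutVal x H := by
  set P : ι → Finset (V × V) := fun i => (T i ∩ H) ×ˢ (T i \ H)
  have hP : (↑(Finset.univ : Finset ι) : Set ι).PairwiseDisjoint P := by
    intro i _ j _ hij
    refine Finset.disjoint_left.mpr fun p hpi hpj => ?_
    simp only [P, Finset.mem_product, Finset.mem_inter] at hpi hpj
    exact Finset.disjoint_left.mp (hT hij) hpi.1.1 hpj.1.1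
  have hsub : Finset.univ.biUnion P ⊆ (H ×ˢ Hᶜ).erase (u, v) := by
    intro p hp
    simp only [P, Finset.mem_biUnion, Finset.mem_univ, true_and, Finset.mem_product,
      Finset.mem_inter, Finset.mem_sdiff] at hp
    obtain ⟨i, ⟨hpT, hpH⟩, hqT, hqH⟩ := hp
    refine Finset.mem_erase.mpr ⟨?_, Finset.mem_product.mpr ⟨hpH, Finset.mem_compl.mpr hqH⟩⟩
    rintro rfl
    exact huv i hpT hqT
  calc ∑ i, eVal x (T i ∩ H) (T i \ H) + x u v
      = ∑ p ∈ Finset.univ.biUnion P, x p.1 p.2 + x u v := by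
        rw [Finset.sum_biUnion hP]
        simp only [P, eVal, Finset.sum_product]
    _ ≤ ∑ p ∈ (H ×ˢ Hᶜ).erase (u, v), x p.1 p.2 + x u v := by
        gcongr
        exact fun p _ _ => hx p.1 p.2
    _ = cutVal x H := by
        rw [Finset.sum_erase_add _ _ (Finset.mem_product.mpr ⟨hu, Finset.mem_compl.mpr hv⟩),
          cutVal, Finset.sum_product]

theorem half_edge_triangle_escapes_general
    (x : V → V → ℝ)
    (hval : ∀ i j, x i j = 0 ∨ x i j = 1 / 2 ∨ x i j = 1)
    (𝒯 : Finset (Finset V)) (htri : TriDecomp x 𝒯)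
    (H : Finset V) (t : ℕ) (T : Fin t → Finset V)
    (hdisj : ∀ i j, i ≠ j → Disjoint (T i) (T j))
    (i₀ : Fin t) (a b : V)
    (ha : a ∈ (T i₀) ∩ H) (hb : b ∈ (T i₀) \ H)
    (hab : x a b = 1 / 2)
    (honly : ∀ a' ∈ (T i₀) ∩ H, ∀ b' ∈ (T i₀) \ H, ¬(a' = a ∧ b' = b) → x a' b' = 0) :
    (∀ tr ∈ 𝒯, a ∈ tr → b ∈ tr → ∀ c ∈ tr, c ≠ a → c ≠ b → c ∉ T i₀) ∧
    1 / 2 ≤ cutVal x H - ∑ i, eVal x ((T i) ∩ H) ((T i) \ H) := by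
  obtain ⟨hcard, hhalf, huniq⟩ := htri
  have hx : ∀ i j, 0 ≤ x i j := fun i j => by rcases hval i j with h | h | h <;> norm_num [h]
  have hT : Pairwise (Disjoint on T) := fun i j => hdisj i j
  obtain ⟨haT, haH⟩ := Finset.mem_inter.mp ha
  obtain ⟨hbT, hbH⟩ := Finset.mem_sdiff.mp hb
  have hthird : ∀ tr ∈ 𝒯, a ∈ tr → b ∈ tr → ∀ c ∈ tr, c ≠ a → c ≠ b → c ∉ T i₀ :=
    fun tr htr hatr hbtr c hctr hca hcb => notMem_of_adj_ends_of_unique_crossing ha hb honly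
      (by rw [hhalf tr htr a hatr c hctr hca.symm]; norm_num)
      (by rw [hhalf tr htr c hctr b hbtr hcb]; norm_num) hca hcb
  refine ⟨hthird, ?_⟩
  obtain ⟨tr, ⟨htr, hatr, hbtr⟩, -⟩ := huniq a b (fun h => hbH (h ▸ haH)) hab
  obtain ⟨c, hctr, hca, hcb⟩ := Finset.exists_mem_ne_ne_of_card_eq_three (hcard tr htr) a b
  have hcT := hthird tr htr hatr hbtr c hctr hca hcb
  by_cases hcH : c ∈ H
  · have := sum_eVal_add_le_cutVal hx hT hcH hbH fun i hci hbi =>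
      notMem_of_mem_of_notMem_of_pairwise_disjoint hT hbT hcT i hbi hci
    linarith [hhalf tr htr c hctr b hbtr hcb]
  · have := sum_eVal_add_le_cutVal hx hT haH hcH
      (notMem_of_mem_of_notMem_of_pairwise_disjoint hT haT hcT)
    linarith [hhalf tr htr a hatr c hctr hca.symm]

/-- If exactly one half-edge (and nothing else) crosses from `A₁ = T₁ ∩ H` to `B₁ = T₁ \ H`
in a violated comb, then the third vertex of its triangle lies outside `T₁`, and the weight
of edges leaving `H` not inside any tooth is at least 1/2. -/
theorem half_edge_triangle_escapes
    (x : V → V → ℝ)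
    (hsym : ∀ i j, x i j = x j i)
    (hdiag : ∀ i, x i i = 0)
    (hval : ∀ i j, x i j = 0 ∨ x i j = 1 / 2 ∨ x i j = 1)
    (hdeg : ∀ i : V, ∑ j, x i j = 2)
    (hsub : ∀ S : Finset V, S.Nonempty → S ≠ Finset.univ → 2 ≤ cutVal x S)
    (𝒯 : Finset (Finset V)) (htri : TriDecomp x 𝒯)
    (H : Finset V) (t : ℕ) (ht : Odd t) (T : Fin t → Finset V)
    (hdisj : ∀ i j, i ≠ j → Disjoint (T i) (T j))
    (hteeth : ∀ i, ((T i) ∩ H).Nonempty ∧ ((T i) \ H).Nonempty)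
    (hviol : cutVal x H + ∑ i, cutVal x (T i) < 3 * (t : ℝ) + 1)
    (i₀ : Fin t) (a b : V)
    (ha : a ∈ (T i₀) ∩ H) (hb : b ∈ (T i₀) \ H)
    (hab : x a b = 1 / 2)
    (honly : ∀ a' ∈ (T i₀) ∩ H, ∀ b' ∈ (T i₀) \ H, ¬(a' = a ∧ b' = b) → x a' b' = 0) :
    (∀ tr ∈ 𝒯, a ∈ tr → b ∈ tr → ∀ c ∈ tr, c ≠ a → c ≠ b → c ∉ T i₀) ∧
    1 / 2 ≤ cutVal x H - ∑ i, eVal x ((T i) ∩ H) ((T i) \ H) :=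
  half_edge_triangle_escapes_general x hval 𝒯 htri H t T hdisj i₀ a b ha hb hab honly
end

section
/- Let x assign weight 1/2 to all three edges of a triangle P = {a,b,c} inside a feasible half-integral Held–Karp solution, so that x(δ(P)) = 3 and each vertex of P has x-weight exactly 1 leaving P. If T ⊇ P is any set with x(δ(T)) = 2, then the support of x restricted to T contains a path between two distinct vertices of P that avoids all edges within P. -/
open Finset

variable {V : Type*} [Fintype V] [DecidableEq V]

/-!
If no two vertices of `P` are joined by a detour, the sets `S_u` of vertices reachable from
`u ∈ P` along support edges inside `T` that are not edges within `P` are pairwise disjoint, and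
the only weight leaving `S_u` inside `T` runs along the edges from `u` to `P \ {u}`. The subtour
constraint `x(δ(S_u)) ≥ 2` then forces weight at least `2 - x(u, P \ {u})` from `S_u` out of `T`,
so `x(δ(T)) ≥ 2|P| - 2x(E(P))`, which is `3` for a half-weight triangle.
-/

section Detour

omit [Fintype V] [DecidableEq V]

def detourGraph (x : V → V → ℝ) (T P : Finset V) : SimpleGraph V where
  Adj i j := (support x).Adj i j ∧ i ∈ T ∧ j ∈ T ∧ (i ∉ P ∨ j ∉ P)
  symm := ⟨fun _ _ h => ⟨h.1.symm, h.2.2.1, h.2.1, h.2.2.2.symm⟩⟩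
  loopless := ⟨fun _ h => h.1.1 rfl⟩

@[simp]
lemma detourGraph_adj {x : V → V → ℝ} {T P : Finset V} {i j : V} :
    (detourGraph x T P).Adj i j ↔ (support x).Adj i j ∧ i ∈ T ∧ j ∈ T ∧ (i ∉ P ∨ j ∉ P) :=
  Iff.rfl

namespace detourGraph

variable {x : V → V → ℝ} {T P : Finset V} {u v : V}

lemma le_support : detourGraph x T P ≤ support x := fun _ _ h => (detourGraph_adj.1 h).1

lemma mem_of_mem_edges {p : (detourGraph x T P).Walk u v} {e : Sym2 V} (he : e ∈ p.edges)
    {w : V} (hw : w ∈ e) : w ∈ T := by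
  induction e with
  | h i j =>
    obtain ⟨-, hi, hj, -⟩ := detourGraph_adj.1 (p.adj_of_mem_edges he)
    rcases Sym2.mem_iff.1 hw with rfl | rfl
    exacts [hi, hj]

lemma exists_notMem_of_mem_edges {p : (detourGraph x T P).Walk u v} {e : Sym2 V}
    (he : e ∈ p.edges) : ∃ w ∈ e, w ∉ P := by
  induction e with
  | h i j =>
    rcases (detourGraph_adj.1 (p.adj_of_mem_edges he)).2.2.2 with hi | hj
    exacts [⟨i, Sym2.mem_mk_left i j, hi⟩, ⟨j, Sym2.mem_mk_right i j, hj⟩]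

lemma support_subset (p : (detourGraph x T P).Walk u v) (hv : v ∈ T) :
    ∀ w ∈ p.support, w ∈ T := by
  intro w hw
  rcases SimpleGraph.Walk.mem_support_iff_exists_mem_edges.1 hw with rfl | ⟨e, he, hwe⟩
  exacts [hv, mem_of_mem_edges he hwe]

lemma exists_detour_of_reachable (hv : v ∈ T) (h : (detourGraph x T P).Reachable u v) :
    ∃ p : (support x).Walk u v, p.IsPath ∧
      (∀ w ∈ p.support, w ∈ T) ∧ (∀ e ∈ p.edges, ∃ w ∈ e, w ∉ P) := by
  classical
  obtain ⟨q⟩ := h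
  refine ⟨q.bypass.mapLe le_support, (SimpleGraph.Walk.isPath_mapLe _).2 q.bypass_isPath, ?_, ?_⟩
  · rw [SimpleGraph.Walk.support_mapLe_eq_support]
    exact support_subset _ hv
  · rw [SimpleGraph.Walk.edges_mapLe_eq_edges]
    exact fun e he => exists_notMem_of_mem_edges he

lemma adj_of_pos (hx : ∀ i j, 0 ≤ x i j) {i j : V} (hij : i ≠ j) (hi : i ∈ T) (hj : j ∈ T)
    (hP : i ∉ P ∨ j ∉ P) (hxij : x i j ≠ 0) : (detourGraph x T P).Adj i j :=
  detourGraph_adj.2 ⟨⟨hij, .inl ((hx i j).lt_of_ne' hxij)⟩, hi, hj, hP⟩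

end detourGraph

end Detour

lemma cutVal_eq_eVal_add_eVal {x : V → V → ℝ} {S T : Finset V} (hST : S ⊆ T) :
    cutVal x S = eVal x S (T \ S) + eVal x S Tᶜ := by
  have hcompl : Sᶜ = (T \ S) ∪ Tᶜ := by
    ext w
    simp only [mem_compl, mem_union, mem_sdiff]
    have := @hST w
    tauto
  rw [cutVal, eVal, eVal, ← sum_add_distrib]
  refine sum_congr rfl fun i _ => ?_
  rw [hcompl, sum_union (disjoint_compl_right.mono_left sdiff_subset)]

open Classical in
noncomputable def detourComponent (x : V → V → ℝ) (T P : Finset V) (u : V) : Finset V :=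
  univ.filter ((detourGraph x T P).Reachable u)

namespace detourComponent

variable {x : V → V → ℝ} {T P : Finset V} {u v : V}

lemma mem_iff {w : V} : w ∈ detourComponent x T P u ↔ (detourGraph x T P).Reachable u w := by
  simp only [detourComponent, mem_filter, mem_univ, true_and]

lemma self_mem : u ∈ detourComponent x T P u := mem_iff.2 .rfl

lemma subset (hu : u ∈ T) : detourComponent x T P u ⊆ T := fun w hw => by
  obtain ⟨p⟩ := (mem_iff.1 hw).symm
  exact detourGraph.support_subset p hu w p.start_mem_support

lemma disjoint (hsep : ∀ u ∈ P, ∀ v ∈ P, u ≠ v → ¬(detourGraph x T P).Reachable u v)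
    (hu : u ∈ P) (hv : v ∈ P) (huv : u ≠ v) :
    Disjoint (detourComponent x T P u) (detourComponent x T P v) :=
  disjoint_left.2 fun _ hwu hwv => hsep u hu v hv huv ((mem_iff.1 hwu).trans (mem_iff.1 hwv).symm)

lemma eq_of_mem_of_mem (hsep : ∀ u ∈ P, ∀ v ∈ P, u ≠ v → ¬(detourGraph x T P).Reachable u v)
    (hu : u ∈ P) {w : V} (hw : w ∈ detourComponent x T P u) (hwP : w ∈ P) : w = u :=
  by_contra fun hwu => hsep u hu w hwP (Ne.symm hwu) (mem_iff.1 hw)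

lemma weight_eq_zero_of_mem_of_notMem (hx : ∀ i j, 0 ≤ x i j) (hu : u ∈ T) {i j : V}
    (hi : i ∈ detourComponent x T P u) (hjT : j ∈ T) (hj : j ∉ detourComponent x T P u)
    (hP : i ∉ P ∨ j ∉ P) : x i j = 0 := by
  by_contra hxij
  have hij : i ≠ j := by rintro rfl; exact hj hi
  have hadj := detourGraph.adj_of_pos hx hij (subset hu hi) hjT hP hxij
  exact hj (mem_iff.2 ((mem_iff.1 hi).trans hadj.reachable))

lemma eVal_sdiff_eq_sum_erase (hx : ∀ i j, 0 ≤ x i j)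
    (hsep : ∀ u ∈ P, ∀ v ∈ P, u ≠ v → ¬(detourGraph x T P).Reachable u v)
    (hPT : P ⊆ T) (hu : u ∈ P) :
    eVal x (detourComponent x T P u) (T \ detourComponent x T P u) = ∑ j ∈ P.erase u, x u j := by
  have hPu : P.erase u ⊆ T \ detourComponent x T P u := fun j hj => by
    obtain ⟨hju, hjP⟩ := mem_erase.1 hj
    exact mem_sdiff.2 ⟨hPT hjP, fun hjC => hju (eq_of_mem_of_mem hsep hu hjC hjP)⟩
  rw [eVal, sum_eq_single_of_mem u self_mem, sum_subset hPu]
  · intro j hj hjPu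
    obtain ⟨hjT, hjC⟩ := mem_sdiff.1 hj
    have hju : j ≠ u := by rintro rfl; exact hjC self_mem
    exact weight_eq_zero_of_mem_of_notMem hx (hPT hu) self_mem hjT hjC
      (.inr fun hjP => hjPu (mem_erase.2 ⟨hju, hjP⟩))
  · intro i hi hiu
    refine sum_eq_zero fun j hj => ?_
    obtain ⟨hjT, hjC⟩ := mem_sdiff.1 hj
    exact weight_eq_zero_of_mem_of_notMem hx (hPT hu) hi hjT hjC
      (.inl fun hiP => hiu (eq_of_mem_of_mem hsep hu hi hiP))

lemma two_sub_le_eVal_compl (hx : ∀ i j, 0 ≤ x i j)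
    (hsub : ∀ A : Finset V, A.Nonempty → A ≠ univ → 2 ≤ cutVal x A)
    (hsep : ∀ u ∈ P, ∀ v ∈ P, u ≠ v → ¬(detourGraph x T P).Reachable u v)
    (hPT : P ⊆ T) (hT : T ≠ univ) (hu : u ∈ P) :
    2 - ∑ j ∈ P.erase u, x u j ≤ eVal x (detourComponent x T P u) Tᶜ := by
  have hCT : detourComponent x T P u ⊆ T := subset (hPT hu)
  have hcut := hsub _ ⟨u, self_mem⟩ fun h => hT (univ_subset_iff.1 (h ▸ hCT))
  rw [cutVal_eq_eVal_add_eVal hCT, eVal_sdiff_eq_sum_erase hx hsep hPT hu] at hcut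
  linarith

end detourComponent

theorem exists_reachable_of_cutVal_lt {x : V → V → ℝ} {T P : Finset V} (hx : ∀ i j, 0 ≤ x i j)
    (hsub : ∀ A : Finset V, A.Nonempty → A ≠ univ → 2 ≤ cutVal x A)
    (hPT : P ⊆ T) (hT : T ≠ univ)
    (hlt : cutVal x T < ∑ u ∈ P, (2 - ∑ j ∈ P.erase u, x u j)) :
    ∃ u ∈ P, ∃ v ∈ P, u ≠ v ∧ (detourGraph x T P).Reachable u v := by
  by_contra! hsep
  have hdisj : (P : Set V).PairwiseDisjoint (detourComponent x T P) :=
    fun u hu v hv huv => detourComponent.disjoint hsep hu hv huv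
  have hcomp : P.biUnion (detourComponent x T P) ⊆ T :=
    biUnion_subset.2 fun u hu => detourComponent.subset (hPT hu)
  refine hlt.not_ge ?_
  calc ∑ u ∈ P, (2 - ∑ j ∈ P.erase u, x u j)
      ≤ ∑ u ∈ P, eVal x (detourComponent x T P u) Tᶜ :=
        sum_le_sum fun u hu => detourComponent.two_sub_le_eVal_compl hx hsub hsep hPT hT hu
    _ = eVal x (P.biUnion (detourComponent x T P)) Tᶜ := (sum_biUnion hdisj).symm
    _ ≤ eVal x T Tᶜ :=
        sum_le_sum_of_subset_of_nonneg hcomp fun i _ _ => sum_nonneg fun j _ => hx i j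
    _ = cutVal x T := rfl

theorem triangle_detour_general
    (x : V → V → ℝ)
    (hsym : ∀ i j, x i j = x j i)
    (hval : ∀ i j, x i j = 0 ∨ x i j = 1 / 2 ∨ x i j = 1)
    (hsub : ∀ A : Finset V, A.Nonempty → A ≠ Finset.univ → 2 ≤ cutVal x A)
    (a b c : V) (hab : a ≠ b) (hac : a ≠ c) (hbc : b ≠ c)
    (hxab : x a b = 1 / 2) (hxbc : x b c = 1 / 2) (hxac : x a c = 1 / 2)
    (T : Finset V) (hPT : ({a, b, c} : Finset V) ⊆ T)
    (hcutT : cutVal x T = 2) :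
    ∃ u ∈ ({a, b, c} : Finset V), ∃ v ∈ ({a, b, c} : Finset V), u ≠ v ∧
      ∃ p : (support x).Walk u v, p.IsPath ∧
        (∀ w ∈ p.support, w ∈ T) ∧
        (∀ e ∈ p.edges, ∃ w ∈ e, w ∉ ({a, b, c} : Finset V)) := by
  have hx : ∀ i j, 0 ≤ x i j := fun i j => by
    rcases hval i j with h | h | h <;> rw [h] <;> norm_num
  have hT : T ≠ univ := by
    rintro rfl
    simp [cutVal] at hcutT
  have hweight :
      ∑ u ∈ ({a, b, c} : Finset V), (2 - ∑ j ∈ ({a, b, c} : Finset V).erase u, x u j) = 3 := by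
    rw [sum_insert (by simp [hab, hac]), sum_pair hbc]
    simp only [erase_insert_eq_erase, mem_insert, hab, mem_singleton, hac, or_self,
      not_false_eq_true, erase_eq_of_notMem, hbc, sum_insert, hxab, one_div, sum_singleton, hxac,
      hab.symm, or_false, or_true, sum_erase_eq_sub, hsym b a, hxbc, hac.symm, hbc.symm, hsym c a,
      hsym c b]
    ring
  obtain ⟨u, hu, v, hv, huv, hreach⟩ :=
    exists_reachable_of_cutVal_lt hx hsub hPT hT (by linarith)
  exact ⟨u, hu, v, hv, huv, detourGraph.exists_detour_of_reachable (hPT hv) hreach⟩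

/-- Gadget specialization of the cycle lemma: a half-weight triangle `P = {a,b,c}` inside a
set `T` with `x(δ(T)) = 2` forces a path in the support of `x`, inside `T`, between two
vertices of `P` avoiding the edges within `P`. -/
theorem triangle_detour
    (x : V → V → ℝ)
    (hsym : ∀ i j, x i j = x j i)
    (hdiag : ∀ i, x i i = 0)
    (hval : ∀ i j, x i j = 0 ∨ x i j = 1 / 2 ∨ x i j = 1)
    (hdeg : ∀ i : V, ∑ j, x i j = 2)
    (hsub : ∀ A : Finset V, A.Nonempty → A ≠ Finset.univ → 2 ≤ cutVal x A)
    (a b c : V) (hab : a ≠ b) (hac : a ≠ c) (hbc : b ≠ c)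
    (hxab : x a b = 1 / 2) (hxbc : x b c = 1 / 2) (hxac : x a c = 1 / 2)
    (T : Finset V) (hPT : ({a, b, c} : Finset V) ⊆ T)
    (hcutP : cutVal x ({a, b, c} : Finset V) = 3)
    (hleave : ∀ u ∈ ({a, b, c} : Finset V),
      eVal x {u} (Finset.univ \ ({a, b, c} : Finset V)) = 1)
    (hcutT : cutVal x T = 2) :
    ∃ u ∈ ({a, b, c} : Finset V), ∃ v ∈ ({a, b, c} : Finset V), u ≠ v ∧
      ∃ p : (support x).Walk u v, p.IsPath ∧
        (∀ w ∈ p.support, w ∈ T) ∧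
        (∀ e ∈ p.edges, ∃ w ∈ e, w ∉ ({a, b, c} : Finset V)) :=
  triangle_detour_general x hsym hval hsub a b c hab hac hbc hxab hxbc hxac T hPT hcutT
end
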